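/- Let D ≥ 2 and F ≥ 0. There is a constant C = C(D, F) such that for every v ∈ ℝ^{D−1} with |v| ≤ F and every δ ∈ (0,1], the function ψ defined on ℝ^D ∖ {0} by ψ(ξ_0, ξ) = δ|ξ|² / ((ξ_0 + v·ξ)² + δ|ξ|²), for (ξ_0, ξ) ∈ ℝ × ℝ^{D−1}, which is homogeneous of degree zero, satisfies |∇ψ(ξ_0, ξ)| ≤ C δ^{−1/2} for every unit vector (ξ_0, ξ) ∈ S^{D−1}, where ∇ψ is the gradient in ℝ^D and |·| the Euclidean norm. -/

import Mathlib

/-!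
Write `ψ = δ|ξ|² / Q` with `Q = L² + δ|ξ|²` and `L = ξ₀ + v·ξ`. By the quotient rule
`∇ψ = (L² ∇(δ|ξ|²) - δ|ξ|² ∇(L²)) / Q²`, so with `u = |L|` and `w = √δ |ξ|`, for which
`Q = u² + w²`, one gets `|∇ψ| ≤ (2√δ u²w + 2(1 + |v|) u w²) / Q² ≤ 2(√δ + 1 + |v|) / √Q`.
On the unit sphere `Q ≥ δ / (2(1 + |v|²))`, because `ξ₀ = L - v·ξ` and `δ ≤ 1`; hence
`|∇ψ| ≲ δ^{-1/2}`.
-/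

/-- The symbol `ψ(ξ_0, ξ) = δ|ξ|²/((ξ_0 + v·ξ)² + δ|ξ|²)`, written on
`ℝ^D = ℝ^{d+1}` with `ξ 0` the time frequency and `ξ k.succ` the spatial frequencies. -/
noncomputable def psiSym (d : ℕ) (v : EuclideanSpace ℝ (Fin d)) (δ : ℝ)
    (ξ : EuclideanSpace ℝ (Fin (d + 1))) : ℝ :=
  δ * (∑ k : Fin d, (ξ k.succ) ^ 2) /
    ((ξ 0 + ∑ k : Fin d, v k * ξ k.succ) ^ 2 + δ * ∑ k : Fin d, (ξ k.succ) ^ 2)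

theorem HasFDerivAt.div_add_self {𝕜 E : Type*} [NontriviallyNormedField 𝕜] [NormedAddCommGroup E]
    [NormedSpace 𝕜 E] {f g : E → 𝕜} {f' g' : E →L[𝕜] 𝕜} {x : E} (hf : HasFDerivAt f f' x)
    (hg : HasFDerivAt g g' x) (hx : f x + g x ≠ 0) :
    HasFDerivAt (fun y => g y / (f y + g y)) (((f x + g x) ^ 2)⁻¹ • (f x • g' - g x • f')) x := by
  have h := hg.mul ((hasDerivAt_inv hx).comp_hasFDerivAt x (hf.add hg))
  refine (h.congr_fderiv ?_).congr_of_eventuallyEq (.of_forall fun y => div_eq_mul_inv _ _)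
  ext y
  simp only [smul_add, neg_smul, smul_neg, Function.comp_apply, Pi.add_apply,
    add_apply, neg_apply, smul_apply, sub_apply, smul_eq_mul]
  field_simp
  ring

theorem mul_sq_mul_add_mul_mul_sq_le {a b u w r : ℝ} (ha : 0 ≤ a) (hb : 0 ≤ b) (hu : 0 ≤ u)
    (hw : 0 ≤ w) (hur : u ≤ r) (hwr : w ≤ r) : a * u ^ 2 * w + b * u * w ^ 2 ≤ (a + b) * r ^ 3 := by
  have hr : 0 ≤ r := hu.trans hur
  calc a * u ^ 2 * w + b * u * w ^ 2 ≤ a * r ^ 2 * r + b * r * r ^ 2 := by gcongr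
    _ = (a + b) * r ^ 3 := by ring

noncomputable def spatialPart (d : ℕ) :
    EuclideanSpace ℝ (Fin (d + 1)) →L[ℝ] EuclideanSpace ℝ (Fin d) :=
  (EuclideanSpace.equiv (Fin d) ℝ).symm.toContinuousLinearMap ∘L
    ContinuousLinearMap.pi fun k => EuclideanSpace.proj k.succ

section
variable {d : ℕ}

@[simp]
theorem spatialPart_apply (ξ : EuclideanSpace ℝ (Fin (d + 1))) (k : Fin d) :
    spatialPart d ξ k = ξ k.succ := rfl

theorem norm_sq_eq_sq_add_norm_spatialPart_sq (ξ : EuclideanSpace ℝ (Fin (d + 1))) :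
    ‖ξ‖ ^ 2 = ξ 0 ^ 2 + ‖spatialPart d ξ‖ ^ 2 := by
  simp [EuclideanSpace.real_norm_sq_eq, Fin.sum_univ_succ]

theorem norm_spatialPart_le (ξ : EuclideanSpace ℝ (Fin (d + 1))) : ‖spatialPart d ξ‖ ≤ ‖ξ‖ := by
  refine (pow_le_pow_iff_left₀ (norm_nonneg _) (norm_nonneg _) two_ne_zero).mp ?_
  rw [norm_sq_eq_sq_add_norm_spatialPart_sq ξ]
  exact le_add_of_nonneg_left (sq_nonneg _)

theorem opNorm_spatialPart_le : ‖spatialPart d‖ ≤ 1 :=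
  ContinuousLinearMap.opNorm_le_bound _ zero_le_one fun ξ => by
    simpa using norm_spatialPart_le ξ

-- `ξ₀ + v·ξ`, the symbol of the transport operator `∂ₜ + v·∇` (up to a factor `i`)
noncomputable def transportForm (d : ℕ) (v : EuclideanSpace ℝ (Fin d)) :
    EuclideanSpace ℝ (Fin (d + 1)) →L[ℝ] ℝ :=
  EuclideanSpace.proj 0 + innerSL ℝ v ∘L spatialPart d

theorem transportForm_apply (v : EuclideanSpace ℝ (Fin d)) (ξ : EuclideanSpace ℝ (Fin (d + 1))) :
    transportForm d v ξ = ξ 0 + inner ℝ v (spatialPart d ξ) := rfl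

theorem norm_transportForm_le (v : EuclideanSpace ℝ (Fin d)) : ‖transportForm d v‖ ≤ 1 + ‖v‖ := by
  refine ContinuousLinearMap.opNorm_le_bound _ (by positivity) fun ξ => ?_
  calc ‖transportForm d v ξ‖ ≤ |ξ 0| + |inner ℝ v (spatialPart d ξ)| := abs_add_le _ _
    _ ≤ ‖ξ‖ + ‖v‖ * ‖ξ‖ := by
      gcongr
      · exact PiLp.norm_apply_le ξ 0
      · exact (abs_real_inner_le_norm _ _).trans (by gcongr; exact norm_spatialPart_le ξ)
    _ = (1 + ‖v‖) * ‖ξ‖ := by ring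

noncomputable def psiDenom (d : ℕ) (v : EuclideanSpace ℝ (Fin d)) (δ : ℝ)
    (ξ : EuclideanSpace ℝ (Fin (d + 1))) : ℝ :=
  transportForm d v ξ ^ 2 + δ * ‖spatialPart d ξ‖ ^ 2

theorem psiSym_eq (v : EuclideanSpace ℝ (Fin d)) (δ : ℝ) (ξ : EuclideanSpace ℝ (Fin (d + 1))) :
    psiSym d v δ ξ = δ * ‖spatialPart d ξ‖ ^ 2 / psiDenom d v δ ξ := by
  simp [psiSym, psiDenom, transportForm_apply, EuclideanSpace.real_norm_sq_eq, PiLp.inner_apply,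
    mul_comm]

theorem psiSym_smul (v : EuclideanSpace ℝ (Fin d)) (δ : ℝ) (ξ : EuclideanSpace ℝ (Fin (d + 1)))
    {t : ℝ} (ht : t ≠ 0) : psiSym d v δ (t • ξ) = psiSym d v δ ξ := by
  have hsmul : psiDenom d v δ (t • ξ) = t ^ 2 * psiDenom d v δ ξ := by
    simp only [psiDenom, map_smul, norm_smul, smul_eq_mul, mul_pow, Real.norm_eq_abs, sq_abs]
    ring
  rw [psiSym_eq, psiSym_eq, hsmul, map_smul, norm_smul, mul_pow, Real.norm_eq_abs, sq_abs,
    mul_left_comm, mul_div_mul_left _ _ (pow_ne_zero 2 ht)]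

theorem mul_norm_sq_le_psiDenom (v : EuclideanSpace ℝ (Fin d)) {δ : ℝ} (hδ : 0 ≤ δ) (hδ1 : δ ≤ 1)
    (ξ : EuclideanSpace ℝ (Fin (d + 1))) :
    δ * ‖ξ‖ ^ 2 ≤ 2 * (1 + ‖v‖ ^ 2) * psiDenom d v δ ξ := by
  set s := ‖spatialPart d ξ‖
  set L := transportForm d v ξ
  have hinner : inner ℝ v (spatialPart d ξ) ^ 2 ≤ ‖v‖ ^ 2 * s ^ 2 := by
    rw [← mul_pow, ← sq_abs]
    exact pow_le_pow_left₀ (abs_nonneg _) (abs_real_inner_le_norm _ _) 2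
  have htime : ξ 0 ^ 2 ≤ 2 * L ^ 2 + 2 * ‖v‖ ^ 2 * s ^ 2 := by
    rw [show ξ 0 = L - inner ℝ v (spatialPart d ξ) by simp only [L, transportForm_apply]; ring]
    nlinarith [sq_nonneg (L + inner ℝ v (spatialPart d ξ))]
  rw [norm_sq_eq_sq_add_norm_spatialPart_sq, psiDenom]
  nlinarith [mul_nonneg hδ (sq_nonneg s), mul_nonneg hδ (sq_nonneg ‖v‖)]

theorem hasFDerivAt_psiSym (v : EuclideanSpace ℝ (Fin d)) (δ : ℝ)
    {ξ : EuclideanSpace ℝ (Fin (d + 1))} (hξ : psiDenom d v δ ξ ≠ 0) :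
    HasFDerivAt (psiSym d v δ)
      ((psiDenom d v δ ξ ^ 2)⁻¹ • (transportForm d v ξ ^ 2 •
          (δ • (2 • (innerSL ℝ (spatialPart d ξ)).comp (spatialPart d))) -
        (δ * ‖spatialPart d ξ‖ ^ 2) •
          ((2 • transportForm d v ξ) • transportForm d v))) ξ := by
  have hL := (transportForm d v).hasFDerivAt (x := ξ) |>.pow 2
  have hS := ((spatialPart d).hasFDerivAt (x := ξ)).norm_sq.const_mul δ
  rw [Nat.add_one_sub_one, pow_one] at hL
  rw [funext (psiSym_eq v δ)]
  exact hL.div_add_self hS hξ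

theorem norm_fderiv_psiSym_le_div_psiDenom_sq (v : EuclideanSpace ℝ (Fin d)) {δ : ℝ}
    (hδ : 0 ≤ δ) {ξ : EuclideanSpace ℝ (Fin (d + 1))} (hξ : psiDenom d v δ ξ ≠ 0) :
    ‖fderiv ℝ (psiSym d v δ) ξ‖ ≤
      (transportForm d v ξ ^ 2 * (δ * (2 * ‖spatialPart d ξ‖)) +
        δ * ‖spatialPart d ξ‖ ^ 2 * (2 * |transportForm d v ξ| * (1 + ‖v‖))) /
        psiDenom d v δ ξ ^ 2 := by
  set L := transportForm d v ξ
  set s := ‖spatialPart d ξ‖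
  have hdL : ‖(2 • L) • transportForm d v‖ ≤ 2 * |L| * (1 + ‖v‖) := by
    rw [norm_smul, nsmul_eq_mul, Nat.cast_ofNat, norm_mul, Real.norm_two, Real.norm_eq_abs]
    gcongr
    exact norm_transportForm_le v
  have hdS : ‖δ • 2 • (innerSL ℝ (spatialPart d ξ)).comp (spatialPart d)‖ ≤ δ * (2 * s) := by
    rw [norm_smul, Real.norm_of_nonneg hδ]
    gcongr
    calc _ ≤ 2 * ‖(innerSL ℝ (spatialPart d ξ)).comp (spatialPart d)‖ := norm_nsmul_le
      _ ≤ 2 * (‖innerSL ℝ (spatialPart d ξ)‖ * ‖spatialPart d‖) := by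
          gcongr; exact ContinuousLinearMap.opNorm_comp_le _ _
      _ = 2 * (s * ‖spatialPart d‖) := by rw [innerSL_apply_norm]
      _ ≤ 2 * (s * 1) := by gcongr; exact opNorm_spatialPart_le
      _ = 2 * s := by rw [mul_one]
  rw [(hasFDerivAt_psiSym v δ hξ).fderiv, norm_smul, norm_inv, Real.norm_of_nonneg (sq_nonneg _),
    inv_mul_eq_div]
  gcongr
  refine (norm_sub_le _ _).trans (add_le_add ?_ ?_)
  · rw [norm_smul, Real.norm_of_nonneg (sq_nonneg L)]; gcongr
  · rw [norm_smul, Real.norm_of_nonneg (by positivity)]; gcongr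

theorem norm_fderiv_psiSym_le (v : EuclideanSpace ℝ (Fin d)) {δ : ℝ} (hδ : 0 ≤ δ)
    {ξ : EuclideanSpace ℝ (Fin (d + 1))} (hξ : 0 < psiDenom d v δ ξ) :
    ‖fderiv ℝ (psiSym d v δ) ξ‖ ≤ 2 * (√δ + 1 + ‖v‖) / √(psiDenom d v δ ξ) := by
  refine (norm_fderiv_psiSym_le_div_psiDenom_sq v hδ hξ.ne').trans ?_
  set L := transportForm d v ξ
  set s := ‖spatialPart d ξ‖
  set r := √(psiDenom d v δ ξ)
  have hr : 0 < r := Real.sqrt_pos.mpr hξ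
  have hr2 : r ^ 2 = L ^ 2 + δ * s ^ 2 := Real.sq_sqrt hξ.le
  have hLr : |L| ≤ r := by rw [← sq_le_sq₀ (abs_nonneg L) hr.le, sq_abs]; nlinarith
  have hsr : √δ * s ≤ r := by
    rw [← sq_le_sq₀ (by positivity) hr.le, mul_pow, Real.sq_sqrt hδ]; nlinarith [sq_nonneg L]
  rw [← Real.sq_sqrt hξ.le, ← pow_mul]
  calc _ = ((2 * √δ) * |L| ^ 2 * (√δ * s) + (2 * (1 + ‖v‖)) * |L| * (√δ * s) ^ 2) / r ^ 4 := by
        rw [sq_abs]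
        linear_combination (2 * L ^ 2 * s + 2 * (1 + ‖v‖) * |L| * s ^ 2) / r ^ 4 *
          (Real.sq_sqrt hδ).symm
    _ ≤ (2 * √δ + 2 * (1 + ‖v‖)) * r ^ 3 / r ^ 4 := by
        gcongr
        exact mul_sq_mul_add_mul_mul_sq_le (by positivity) (by positivity) (abs_nonneg L)
          (by positivity) hLr hsr
    _ = 2 * (√δ + 1 + ‖v‖) / r := by field_simp; ring

end

theorem stmt7_general (d : ℕ) (F : ℝ) (hF : 0 ≤ F) :
    ∃ C : ℝ, 0 < C ∧
      ∀ v : EuclideanSpace ℝ (Fin d), ‖v‖ ≤ F →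
        ∀ δ : ℝ, 0 < δ → δ ≤ 1 →
          (∀ ξ : EuclideanSpace ℝ (Fin (d + 1)), ξ ≠ 0 → ∀ t : ℝ, 0 < t →
            psiSym d v δ (t • ξ) = psiSym d v δ ξ) ∧
          ∀ ξ : EuclideanSpace ℝ (Fin (d + 1)), ‖ξ‖ = 1 →
            ‖fderiv ℝ (psiSym d v δ) ξ‖ ≤ C * δ ^ (-(1 : ℝ) / 2) := by
  set K := 2 * (1 + F ^ 2)
  refine ⟨2 * (2 + F) * √K, by positivity, fun v hv δ hδ hδ1 =>
    ⟨fun ξ _ t ht => psiSym_smul v δ ξ ht.ne', fun ξ hξ => ?_⟩⟩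
  have hδQ := mul_norm_sq_le_psiDenom v hδ.le hδ1 ξ
  rw [hξ, one_pow, mul_one] at hδQ
  have hQ : 0 < psiDenom d v δ ξ := pos_of_mul_pos_right (hδ.trans_le hδQ) (by positivity)
  have hδK : δ / K ≤ psiDenom d v δ ξ := by
    rw [div_le_iff₀' (by positivity)]
    refine hδQ.trans (mul_le_mul_of_nonneg_right ?_ hQ.le)
    simp only [K]
    gcongr
  calc ‖fderiv ℝ (psiSym d v δ) ξ‖ ≤ 2 * (√δ + 1 + ‖v‖) / √(psiDenom d v δ ξ) :=
        norm_fderiv_psiSym_le v hδ.le hQ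
    _ ≤ 2 * (1 + 1 + F) / √(δ / K) := by
        gcongr
        exact Real.sqrt_le_one.mpr hδ1
    _ = 2 * (2 + F) * √K * δ ^ (-(1 : ℝ) / 2) := by
        rw [neg_div, Real.rpow_neg hδ.le, ← Real.sqrt_eq_rpow, Real.sqrt_div hδ.le]
        field_simp
        ring

/-- For `D = d + 1 ≥ 2` and `F ≥ 0` there is `C = C(D,F)` such that for
every `v` with `|v| ≤ F` and `δ ∈ (0,1]`, the symbol `ψ` is homogeneous of degree zero and
satisfies `|∇ψ(ξ)| ≤ C δ^{-1/2}` on the unit sphere. -/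
theorem stmt7 (d : ℕ) (hd : 1 ≤ d) (F : ℝ) (hF : 0 ≤ F) :
    ∃ C : ℝ, 0 < C ∧
      ∀ v : EuclideanSpace ℝ (Fin d), ‖v‖ ≤ F →
        ∀ δ : ℝ, 0 < δ → δ ≤ 1 →
          (∀ ξ : EuclideanSpace ℝ (Fin (d + 1)), ξ ≠ 0 → ∀ t : ℝ, 0 < t →
            psiSym d v δ (t • ξ) = psiSym d v δ ξ) ∧
          ∀ ξ : EuclideanSpace ℝ (Fin (d + 1)), ‖ξ‖ = 1 →
            ‖fderiv ℝ (psiSym d v δ) ξ‖ ≤ C * δ ^ (-(1 : ℝ) / 2) :=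
  stmt7_general d F hF
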